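/- arXiv:2007.10572 — 2 statements merged into one kernel-verified Lean document; each statement's English description precedes it below -/
import Mathlib

section
/- Let A be a 2n×2n real positive definite matrix and m ≤ n a positive integer. Every symplectically orthonormal set {u_j, v_j : 1 ≤ j ≤ m} in which each (u_j, v_j) is a symplectic eigenvector pair of A can be extended to a symplectic basis {u_j, v_j : 1 ≤ j ≤ n} of ℝ^{2n} in which each (u_j, v_j) is a symplectic eigenvector pair of A. -/
open Filter Matrix Topology
open scoped Classical

/-- The space of `2n × 2n` real matrices, indexed by `Fin n ⊕ Fin n`. -/
abbrev Mat (n : ℕ) := Matrix (Fin n ⊕ Fin n) (Fin n ⊕ Fin n) ℝ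

/-- `2n × 2m` real matrices. -/
abbrev MatR (n m : ℕ) := Matrix (Fin n ⊕ Fin n) (Fin m ⊕ Fin m) ℝ

/-- The standard symplectic form matrix `J = [[0, I], [-I, 0]]`. -/
def symplJ (n : ℕ) : Mat n := Matrix.fromBlocks 0 1 (-1) 0

/-- The increasingly sorted symplectic eigenvalues of `A` (0-based indexing), defined via
Williamson's theorem: `d : Fin n → ℝ` is the unique monotone positive tuple such that
`MᵀAM = diag d ⊕ diag d` for some symplectic `M` (which exists whenever `A` is positive
definite). -/
noncomputable def symplEig {n : ℕ} (A : Mat n) : Fin n → ℝ :=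
  if h : ∃ d : Fin n → ℝ, Monotone d ∧ (∀ i, 0 < d i) ∧
      ∃ M : Mat n, Mᵀ * symplJ n * M = symplJ n ∧
        Mᵀ * A * M = Matrix.fromBlocks (Matrix.diagonal d) 0 0 (Matrix.diagonal d)
  then h.choose else fun _ => 0

/-- `sEig A j` is the `j`-th symplectic eigenvalue `d_j(A)`, with 1-based index `j`. -/
noncomputable def sEig {n : ℕ} (A : Mat n) (j : ℕ) : ℝ :=
  if h : j - 1 < n then symplEig A ⟨j - 1, h⟩ else 0

/-- `i_m`: the number of indices `k ≤ m` (1-based) with `d_k(A) = d_m(A)`. -/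
noncomputable def iIdx {n : ℕ} (A : Mat n) (m : ℕ) : ℕ :=
  ((Finset.Icc 1 n).filter fun k => k ≤ m ∧ sEig A k = sEig A m).card

/-- `j_m`: the number of indices `k > m` (1-based) with `d_k(A) = d_m(A)`. -/
noncomputable def jIdx {n : ℕ} (A : Mat n) (m : ℕ) : ℕ :=
  ((Finset.Icc 1 n).filter fun k => m < k ∧ sEig A k = sEig A m).card

/-- Membership in `Sp(2n, 2m)`: the columns form a symplectically orthonormal set,
equivalently `Sᵀ J_{2n} S = J_{2m}`. -/
def InSp (n m : ℕ) (S : MatR n m) : Prop := Sᵀ * symplJ n * S = symplJ m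

/-- Membership in `Sp(2n, 2m, A)`: additionally the `j`-th column pair `(u_j, v_j)` is a pair of
symplectic eigenvectors of `A` for the symplectic eigenvalue `d_j(A)`. -/
def InSpA (n m : ℕ) (A : Mat n) (S : MatR n m) : Prop :=
  InSp n m S ∧ ∀ j : Fin m,
    A *ᵥ (fun i => S i (Sum.inl j)) = sEig A (j + 1) • (symplJ n *ᵥ fun i => S i (Sum.inr j)) ∧
    A *ᵥ (fun i => S i (Sum.inr j)) = (-sEig A (j + 1)) • (symplJ n *ᵥ fun i => S i (Sum.inl j))

/-- The inner product `⟨X, Y⟩ = tr (X Y)` on matrices. -/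
noncomputable def minner {α : Type*} [Fintype α] (X Y : Matrix α α ℝ) : ℝ := (X * Y).trace

/-- `σ_m : S(2n) → (-∞, ∞]`, equal to `-2 (d_1(P) + ⋯ + d_m(P))` on positive definite `P`
and `∞` elsewhere. -/
noncomputable def sigmaE {n : ℕ} (m : ℕ) (P : Mat n) : EReal :=
  if P.PosDef then (((-2) * ∑ j ∈ Finset.Icc 1 m, sEig P j : ℝ) : EReal) else ⊤

/-- The real-valued version of `σ_m`, i.e. `-2 (d_1(P) + ⋯ + d_m(P))`. -/
noncomputable def sigmaR {n : ℕ} (m : ℕ) (P : Mat n) : ℝ :=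
  (-2) * ∑ j ∈ Finset.Icc 1 m, sEig P j

/-- The Fenchel subdifferential of `σ_m` at `A`, within the space `S(2n)` of symmetric
matrices. -/
noncomputable def sigmaSub {n : ℕ} (m : ℕ) (A : Mat n) : Set (Mat n) :=
  {X | X.IsSymm ∧ ∀ H : Mat n, H.IsSymm →
    ((minner X (H - A) : ℝ) : EReal) ≤ sigmaE m H - sigmaE m A}

/-- `λ_k↓(C)`: the `k`-th largest eigenvalue (1-based) of the Hermitian matrix `C`. -/
noncomputable def kthLargestEig {ι : Type*} [Fintype ι] [DecidableEq ι]
    (C : Matrix ι ι ℂ) (k : ℕ) : ℝ :=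
  if h : C.IsHermitian then
    ((Finset.univ.val.map h.eigenvalues).sort (· ≤ ·)).getD (Fintype.card ι - k) 0
  else 0

/-- The index set for `M̃`: indices whose symplectic eigenvalue equals `d_m(A)`. -/
abbrev tilIdx {n : ℕ} (A : Mat n) (m : ℕ) := {k : Fin n // symplEig A k = sEig A m}

/-- The index set for `M̄`: indices whose symplectic eigenvalue is `< d_m(A)`. -/
abbrev barIdx {n : ℕ} (A : Mat n) (m : ℕ) := {k : Fin n // symplEig A k < sEig A m}

/-- `M̃`: the submatrix of `M` consisting of the column pairs `(u_k, v_k)` with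
`d_k(A) = d_m(A)`. -/
noncomputable def Mtil {n : ℕ} (A : Mat n) (m : ℕ) (M : Mat n) :
    Matrix (Fin n ⊕ Fin n) (tilIdx A m ⊕ tilIdx A m) ℝ :=
  M.submatrix id (Sum.map Subtype.val Subtype.val)

/-- `M̄`: the submatrix of `M` consisting of the column pairs `(u_k, v_k)` with
`d_k(A) < d_m(A)`. -/
noncomputable def Mbar {n : ℕ} (A : Mat n) (m : ℕ) (M : Mat n) :
    Matrix (Fin n ⊕ Fin n) (barIdx A m ⊕ barIdx A m) ℝ :=
  M.submatrix id (Sum.map Subtype.val Subtype.val)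

/-- `B̄ = -M̄ᵀ B M̄`. -/
noncomputable def Bbar {n : ℕ} (A : Mat n) (m : ℕ) (M B : Mat n) :
    Matrix (barIdx A m ⊕ barIdx A m) (barIdx A m ⊕ barIdx A m) ℝ :=
  -((Mbar A m M)ᵀ * B * Mbar A m M)

/-- `B̃ = -M̃ᵀ B M̃`. -/
noncomputable def Btil {n : ℕ} (A : Mat n) (m : ℕ) (M B : Mat n) :
    Matrix (tilIdx A m ⊕ tilIdx A m) (tilIdx A m ⊕ tilIdx A m) ℝ :=
  -((Mtil A m M)ᵀ * B * Mtil A m M)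

/-- `B̃̃ = B̃₁₁ + B̃₂₂ + i (B̃₁₂ - B̃₁₂ᵀ)`, a Hermitian matrix. -/
noncomputable def Btiltil {n : ℕ} (A : Mat n) (m : ℕ) (M B : Mat n) :
    Matrix (tilIdx A m) (tilIdx A m) ℂ :=
  fun p q =>
    ((Btil A m M B (Sum.inl p) (Sum.inl q) + Btil A m M B (Sum.inr p) (Sum.inr q) : ℝ) : ℂ) +
      Complex.I *
        ((Btil A m M B (Sum.inl p) (Sum.inr q) - Btil A m M B (Sum.inl q) (Sum.inr p) : ℝ) : ℂ)

/-- The directional derivative `d_m′(A; B)` of the `m`-th symplectic eigenvalue (1-based `m`). -/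
noncomputable def dDeriv {n : ℕ} (A B : Mat n) (m : ℕ) : ℝ :=
  limUnder (𝓝[>] (0 : ℝ)) (fun t => (sEig (A + t • B) m - sEig A m) / t)

/-- `m̂`: the smallest 1-based index `j` with `d_j(A) = d_m(A)`. -/
noncomputable def mhat {n : ℕ} (A : Mat n) (m : ℕ) : ℕ :=
  sInf {j : ℕ | 1 ≤ j ∧ sEig A j = sEig A m}

/-- The Clarke directional derivative `f°(A; B)` of `f` at `A` in direction `B`, where the
base point varies in the space of symmetric matrices. -/
noncomputable def clarkeD {n : ℕ} (f : Mat n → ℝ) (A B : Mat n) : ℝ :=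
  Filter.limsup (fun p : Mat n × ℝ => (f (p.1 + p.2 • B) - f p.1) / p.2)
    ((𝓝[{X : Mat n | X.IsSymm}] A) ×ˢ (𝓝[>] (0 : ℝ)))

/-- The Clarke subdifferential `∂° f(A)`. -/
noncomputable def clarkeSub {n : ℕ} (f : Mat n → ℝ) (A : Mat n) : Set (Mat n) :=
  {X | X.IsSymm ∧ ∀ H : Mat n, H.IsSymm → minner X H ≤ clarkeD f A H}

/-- The Michel-Penot directional derivative `f◇(A; B)`. -/
noncomputable def mpD {n : ℕ} (f : Mat n → ℝ) (A B : Mat n) : ℝ :=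
  ⨆ X : {X : Mat n // X.IsSymm},
    Filter.limsup (fun t : ℝ => (f (A + t • X.1 + t • B) - f (A + t • X.1)) / t) (𝓝[>] (0 : ℝ))

/-- The Michel-Penot subdifferential `∂◇ f(A)`. -/
noncomputable def mpSub {n : ℕ} (f : Mat n → ℝ) (A : Mat n) : Set (Mat n) :=
  {X | X.IsSymm ∧ ∀ H : Mat n, H.IsSymm → minner X H ≤ mpD f A H}

/-- `S_m(A)`: the set of normalised symplectic eigenvector pairs of `A` corresponding to the
symplectic eigenvalue `d_m(A)`. -/
noncomputable def SmSet {n : ℕ} (A : Mat n) (m : ℕ) :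
    Set ((Fin n ⊕ Fin n → ℝ) × (Fin n ⊕ Fin n → ℝ)) :=
  {p | A *ᵥ p.1 = sEig A m • (symplJ n *ᵥ p.2) ∧
       A *ᵥ p.2 = (-sEig A m) • (symplJ n *ᵥ p.1) ∧
       p.1 ⬝ᵥ (symplJ n *ᵥ p.2) = 1}

/-- The set `{ -(1/2)(xxᵀ + yyᵀ) : (x,y) ∈ S_m(A) }`. -/
noncomputable def gradSet {n : ℕ} (A : Mat n) (m : ℕ) : Set (Mat n) :=
  {X | ∃ p ∈ SmSet A m,
    X = (-(1 / 2) : ℝ) • (Matrix.vecMulVec p.1 p.1 + Matrix.vecMulVec p.2 p.2)}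

/-- A symplectic eigenvector pair of `A` corresponding to some symplectic eigenvalue `d`. -/
noncomputable def EigPair {n : ℕ} (A : Mat n) (u v : Fin n ⊕ Fin n → ℝ) : Prop :=
  (u ≠ 0 ∨ v ≠ 0) ∧ ∃ d : ℝ, (∃ i : Fin n, symplEig A i = d) ∧
    A *ᵥ u = d • (symplJ n *ᵥ v) ∧ A *ᵥ v = (-d) • (symplJ n *ᵥ u)

/-- The helper extending a finite matrix to a function on `ℕ × ℕ` (by zero). -/
def padFun {r i : ℕ} (U : Matrix (Fin r) (Fin i) ℝ) : ℕ → ℕ → ℝ :=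
  fun a b => if h : a < r ∧ b < i then U ⟨a, h.1⟩ ⟨b, h.2⟩ else 0

/-- The set `Δ_m(A)` of structured `2n × 2m` matrices. -/
noncomputable def DeltaSet {n : ℕ} (A : Mat n) (m : ℕ) : Set (MatR n m) :=
  {H | ∃ (U V : Matrix (Fin (iIdx A m + jIdx A m)) (Fin (iIdx A m)) ℝ),
    ((U.map (Complex.ofReal)) + Complex.I • (V.map (Complex.ofReal)))ᴴ *
      ((U.map (Complex.ofReal)) + Complex.I • (V.map (Complex.ofReal))) = 1 ∧
    ∀ (k : Fin n) (c : Fin m),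
      (H (Sum.inl k) (Sum.inl c) =
        if (k : ℕ) < m - iIdx A m ∧ (c : ℕ) < m - iIdx A m then
          (if (k : ℕ) = (c : ℕ) then 1 else 0)
        else if (m - iIdx A m ≤ (k : ℕ) ∧ (k : ℕ) < m + jIdx A m) ∧ m - iIdx A m ≤ (c : ℕ) then
          padFun U ((k : ℕ) - (m - iIdx A m)) ((c : ℕ) - (m - iIdx A m))
        else 0) ∧
      (H (Sum.inl k) (Sum.inr c) =
        if (m - iIdx A m ≤ (k : ℕ) ∧ (k : ℕ) < m + jIdx A m) ∧ m - iIdx A m ≤ (c : ℕ) then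
          padFun V ((k : ℕ) - (m - iIdx A m)) ((c : ℕ) - (m - iIdx A m))
        else 0) ∧
      (H (Sum.inr k) (Sum.inl c) =
        if (m - iIdx A m ≤ (k : ℕ) ∧ (k : ℕ) < m + jIdx A m) ∧ m - iIdx A m ≤ (c : ℕ) then
          -padFun V ((k : ℕ) - (m - iIdx A m)) ((c : ℕ) - (m - iIdx A m))
        else 0) ∧
      (H (Sum.inr k) (Sum.inr c) =
        if (k : ℕ) < m - iIdx A m ∧ (c : ℕ) < m - iIdx A m then
          (if (k : ℕ) = (c : ℕ) then 1 else 0)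
        else if (m - iIdx A m ≤ (k : ℕ) ∧ (k : ℕ) < m + jIdx A m) ∧ m - iIdx A m ≤ (c : ℕ) then
          padFun U ((k : ℕ) - (m - iIdx A m)) ((c : ℕ) - (m - iIdx A m))
        else 0)}

/-- The operator norm (with respect to the Euclidean norm) of a `2n × 2n` real matrix. -/
noncomputable def opN {n : ℕ} (A : Mat n) : ℝ :=
  ‖Matrix.toEuclideanCLM (𝕜 := ℝ) A‖


/-!
Write `T = A⁻¹ J`. A pair `(u, v)` is a symplectic eigenvector pair of `A` for `d` exactly when
`T u = -v / d` and `T v = u / d`, and `T` is skew-adjoint for the inner product `xᵀ A y`, so `T²`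
is self-adjoint and negative definite. The symplectic complement of the span of the given pairs is
`T`-invariant, and nonzero by counting dimensions; an eigenvector `x` of `T²` in it, with
eigenvalue `-λ²`, yields the new pair `(T x / λ, x)` after rescaling. Adding pairs one at a time
gives a symplectic basis of eigenvector pairs; as columns of a matrix it brings `A` to Williamson
normal form. Finally, the value `d` of any normalised pair occurs in every Williamson normal form
of `A` (conjugating back, `D² a = d² a` for the diagonal `D`), in particular among the chosen
symplectic eigenvalues.
-/

open Submodule

section SkewForm

variable {ι κ : Type*} [Fintype ι] {A J : Matrix ι ι ℝ}

theorem dotProduct_mulVec_of_skew (hJ : Jᵀ = -J) (x y : ι → ℝ) :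
    x ⬝ᵥ (J *ᵥ y) = -(y ⬝ᵥ (J *ᵥ x)) := by
  rw [dotProduct_mulVec, ← mulVec_transpose, hJ, neg_mulVec, neg_dotProduct, dotProduct_comm]

theorem dotProduct_mulVec_self_of_skew (hJ : Jᵀ = -J) (x : ι → ℝ) : x ⬝ᵥ (J *ᵥ x) = 0 := by
  linarith [dotProduct_mulVec_of_skew hJ x x]

theorem mulVec_dotProduct_of_symm (hA : Aᵀ = A) (x y : ι → ℝ) :
    (A *ᵥ x) ⬝ᵥ y = x ⬝ᵥ (A *ᵥ y) := by
  rw [← vecMul_transpose, hA, ← dotProduct_mulVec]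

theorem of_mul_mul_transpose_apply {κ' : Type*} (r : κ' → ι → ℝ) (N : Matrix ι ι ℝ) (a b : κ') :
    (of r * N * (of r)ᵀ) a b = r a ⬝ᵥ (N *ᵥ r b) := by
  rw [Matrix.mul_assoc, mul_apply']
  rfl

def IsSymplEigenpair (A J : Matrix ι ι ℝ) (d : ℝ) (u v : ι → ℝ) : Prop :=
  A *ᵥ u = d • (J *ᵥ v) ∧ A *ᵥ v = (-d) • (J *ᵥ u)

def IsSymplOrthonormal [DecidableEq κ] (J : Matrix ι ι ℝ) (u v : κ → ι → ℝ) : Prop :=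
  ∀ j k, u j ⬝ᵥ (J *ᵥ u k) = 0 ∧ v j ⬝ᵥ (J *ᵥ v k) = 0 ∧
    u j ⬝ᵥ (J *ᵥ v k) = if j = k then 1 else 0

theorem IsSymplOrthonormal.comp_equiv {κ' : Type*} [DecidableEq κ] [DecidableEq κ']
    {u v : κ → ι → ℝ} (h : IsSymplOrthonormal J u v) (σ : κ' ≃ κ) :
    IsSymplOrthonormal J (u ∘ σ) (v ∘ σ) := fun j k => by
  simpa [σ.injective.eq_iff] using h (σ j) (σ k)

namespace IsSymplEigenpair

variable {d : ℝ} {u v : ι → ℝ}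

theorem smul (h : IsSymplEigenpair A J d u v) (r : ℝ) :
    IsSymplEigenpair A J d (r • u) (r • v) :=
  ⟨by rw [mulVec_smul, h.1, mulVec_smul, smul_comm],
    by rw [mulVec_smul, h.2, mulVec_smul, smul_comm]⟩

theorem dotProduct_mulVec_self (h : IsSymplEigenpair A J d u v) :
    u ⬝ᵥ (A *ᵥ u) = d * (u ⬝ᵥ (J *ᵥ v)) := by
  rw [h.1, dotProduct_smul, smul_eq_mul]

theorem pos (hA : A.PosDef) (h : IsSymplEigenpair A J d u v) (hn : u ⬝ᵥ (J *ᵥ v) = 1) :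
    0 < d := by
  have hu : u ≠ 0 := by
    rintro rfl
    simp at hn
  simpa [h.dotProduct_mulVec_self, hn] using hA.dotProduct_mulVec_pos hu

theorem exists_smul_normalized (hA : A.PosDef) (h : IsSymplEigenpair A J d u v) (hd : 0 < d)
    (hu : u ≠ 0) : ∃ r : ℝ, (r • u) ⬝ᵥ (J *ᵥ (r • v)) = 1 := by
  have hs : 0 < u ⬝ᵥ (J *ᵥ v) := by
    have := hA.dotProduct_mulVec_pos hu
    rw [star_trivial, h.dotProduct_mulVec_self] at this
    exact pos_of_mul_pos_right this hd.le
  refine ⟨(√(u ⬝ᵥ (J *ᵥ v)))⁻¹, ?_⟩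
  rw [mulVec_smul, smul_dotProduct, dotProduct_smul, smul_smul, smul_eq_mul, ← sq, inv_pow,
    Real.sq_sqrt hs.le, inv_mul_cancel₀ hs.ne']

theorem transpose_mul_mul {M : Matrix ι ι ℝ} {a b : ι → ℝ}
    (h : IsSymplEigenpair A J d (M *ᵥ a) (M *ᵥ b)) (hM : Mᵀ * J * M = J) :
    IsSymplEigenpair (Mᵀ * A * M) J d a b := by
  constructor <;> rw [← mulVec_mulVec, ← mulVec_mulVec, ← hM, ← mulVec_mulVec (M := Mᵀ * J),
    ← mulVec_mulVec (M := Mᵀ)]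
  exacts [by rw [h.1, mulVec_smul], by rw [h.2, mulVec_smul]]

end IsSymplEigenpair

variable [DecidableEq ι]

theorem mulVec_inv_mulVec (hA : IsUnit A) (x : ι → ℝ) : A *ᵥ (A⁻¹ *ᵥ x) = x := by
  rw [mulVec_mulVec, A.mul_nonsing_inv ((isUnit_iff_isUnit_det A).1 hA), one_mulVec]

theorem inv_mulVec_mulVec (hA : IsUnit A) (x : ι → ℝ) : A⁻¹ *ᵥ (A *ᵥ x) = x := by
  rw [mulVec_mulVec, A.nonsing_inv_mul ((isUnit_iff_isUnit_det A).1 hA), one_mulVec]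

theorem IsSymplEigenpair.inv_mulVec_left {d : ℝ} {u v : ι → ℝ} (hA : IsUnit A)
    (h : IsSymplEigenpair A J d u v) (hd : d ≠ 0) : A⁻¹ *ᵥ (J *ᵥ u) = (-d)⁻¹ • v := by
  rw [eq_inv_smul_iff₀ (neg_ne_zero.2 hd), ← mulVec_smul, ← h.2, inv_mulVec_mulVec hA]

theorem IsSymplEigenpair.inv_mulVec_right {d : ℝ} {u v : ι → ℝ} (hA : IsUnit A)
    (h : IsSymplEigenpair A J d u v) (hd : d ≠ 0) : A⁻¹ *ᵥ (J *ᵥ v) = d⁻¹ • u := by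
  rw [eq_inv_smul_iff₀ hd, ← mulVec_smul, ← h.1, inv_mulVec_mulVec hA]

theorem exists_eigenvector_sq_neg_of_skew {E : Type*} [NormedAddCommGroup E]
    [InnerProductSpace ℝ E] [FiniteDimensional ℝ E] {G : E →ₗ[ℝ] E}
    (hG : ∀ x y, inner ℝ (G x) y = -inner ℝ x (G y)) (hGinj : Function.Injective G)
    {W : Submodule ℝ E} (hW : W ≠ ⊥) (hGW : ∀ x ∈ W, G x ∈ W) :
    ∃ x ∈ W, x ≠ 0 ∧ ∃ μ : ℝ, μ < 0 ∧ G (G x) = μ • x := by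
  have hGGW : ∀ x ∈ W, (G ∘ₗ G) x ∈ W := fun x hx => hGW _ (hGW x hx)
  have hsymm : (G ∘ₗ G).IsSymmetric := fun x y => by
    simp only [LinearMap.comp_apply, hG, neg_neg]
  have : Nontrivial W := Submodule.nontrivial_iff_ne_bot.2 hW
  obtain ⟨μ, hμ⟩ : ∃ μ : ℝ, Module.End.HasEigenvalue ((G ∘ₗ G).restrict hGGW) μ :=
    ⟨_, (hsymm.restrict_invariant hGGW).hasEigenvalue_iSup_of_finiteDimensional⟩
  obtain ⟨y, hy⟩ := hμ.exists_hasEigenvector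
  have hy0 : (y : E) ≠ 0 := by simpa using hy.2
  have heig : G (G y) = μ • (y : E) := congrArg Subtype.val hy.apply_eq_smul
  refine ⟨y, y.2, hy0, μ, ?_, heig⟩
  have hμy : μ * inner ℝ (y : E) y = -inner ℝ (G y) (G y) := by
    rw [← real_inner_smul_left, ← heig, hG]
  have hGy : 0 < inner ℝ (G y) (G y) :=
    real_inner_self_pos.2 fun h => hy0 (hGinj (h.trans (map_zero G).symm))
  have hy : 0 < inner ℝ (y : E) y := real_inner_self_pos.2 hy0
  nlinarith

theorem exists_eigenvector_inv_mul_sq (hA : A.PosDef) (hJ : Jᵀ = -J) (hJu : IsUnit J)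
    {W : Submodule ℝ (ι → ℝ)} (hW : W ≠ ⊥) (hTW : ∀ x ∈ W, A⁻¹ *ᵥ (J *ᵥ x) ∈ W) :
    ∃ x ∈ W, x ≠ 0 ∧ ∃ μ : ℝ, μ < 0 ∧ A⁻¹ *ᵥ (J *ᵥ (A⁻¹ *ᵥ (J *ᵥ x))) = μ • x := by
  -- replace the sup norm on `ι → ℝ` by the inner product `⟪x, y⟫ = xᵀ A y`
  let := A.toNormedAddCommGroup hA
  let := A.toInnerProductSpace hA.posSemidef
  have hAsymm : Aᵀ = A := (isHermitian_iff_isSymm.1 hA.isHermitian).eq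
  have := exists_eigenvector_sq_neg_of_skew (G := Matrix.toLin' (A⁻¹ * J)) ?_ ?_ hW ?_
  · simpa only [toLin'_apply, ← mulVec_mulVec] using this
  · intro x y
    change (A *ᵥ y) ⬝ᵥ star ((A⁻¹ * J) *ᵥ x) = -((A *ᵥ ((A⁻¹ * J) *ᵥ y)) ⬝ᵥ star x)
    rw [star_trivial, star_trivial, ← mulVec_mulVec, ← mulVec_mulVec, mulVec_inv_mulVec hA.isUnit,
      mulVec_dotProduct_of_symm hAsymm, mulVec_inv_mulVec hA.isUnit, dotProduct_comm (J *ᵥ y),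
      dotProduct_mulVec_of_skew hJ]
  · exact mulVec_injective_iff_isUnit.2 ((isUnit_nonsing_inv_iff.2 hA.isUnit).mul hJu)
  · simpa only [toLin'_apply, ← mulVec_mulVec] using hTW

theorem isSymplEigenpair_of_eigenvector_inv_mul_sq (hA : IsUnit A) {x : ι → ℝ} {μ : ℝ}
    (hμ : μ < 0) (hx : A⁻¹ *ᵥ (J *ᵥ (A⁻¹ *ᵥ (J *ᵥ x))) = μ • x) :
    IsSymplEigenpair A J (√(-μ))⁻¹ ((√(-μ))⁻¹ • A⁻¹ *ᵥ (J *ᵥ x)) x := by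
  have hc : √(-μ) ≠ 0 := (Real.sqrt_pos.2 (neg_pos.2 hμ)).ne'
  have hAx : A *ᵥ x = μ⁻¹ • (J *ᵥ (A⁻¹ *ᵥ (J *ᵥ x))) := by
    rw [eq_inv_smul_iff₀ hμ.ne, ← mulVec_smul, ← hx, mulVec_inv_mulVec hA]
  refine ⟨by rw [mulVec_smul, mulVec_inv_mulVec hA], ?_⟩
  rw [hAx, mulVec_smul, smul_smul]
  congr 1
  field_simp
  rw [Real.sq_sqrt (neg_nonneg.2 hμ.le), neg_div, div_self hμ.ne]

theorem exists_symplEigenpair_mem (hA : A.PosDef) (hJ : Jᵀ = -J) (hJu : IsUnit J)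
    {W : Submodule ℝ (ι → ℝ)} (hW : W ≠ ⊥) (hTW : ∀ x ∈ W, A⁻¹ *ᵥ (J *ᵥ x) ∈ W) :
    ∃ d : ℝ, ∃ u ∈ W, ∃ v ∈ W, IsSymplEigenpair A J d u v ∧ u ⬝ᵥ (J *ᵥ v) = 1 := by
  obtain ⟨x, hxW, hx0, μ, hμ, hx⟩ := exists_eigenvector_inv_mul_sq hA hJ hJu hW hTW
  have hpair := isSymplEigenpair_of_eigenvector_inv_mul_sq hA.isUnit hμ hx
  have hc : 0 < (√(-μ))⁻¹ := inv_pos.2 (Real.sqrt_pos.2 (neg_pos.2 hμ))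
  have hTx : A⁻¹ *ᵥ (J *ᵥ x) ≠ 0 := by
    simpa [mulVec_mulVec] using
      (mulVec_injective_iff_isUnit.2 ((isUnit_nonsing_inv_iff.2 hA.isUnit).mul hJu)).ne hx0
  obtain ⟨r, hr⟩ := hpair.exists_smul_normalized hA hc (smul_ne_zero hc.ne' hTx)
  exact ⟨_, _, W.smul_mem r (W.smul_mem _ (hTW x hxW)), _, W.smul_mem r hxW, hpair.smul r, hr⟩

theorem orthogonal_span_range_ne_bot [Fintype κ] (J : Matrix ι ι ℝ) (c : κ → ι → ℝ)
    (hκ : Fintype.card κ < Fintype.card ι) :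
    (toBilin' J).orthogonal (span ℝ (Set.range c)) ≠ ⊥ := by
  intro h
  have hdim := LinearMap.BilinForm.finrank_add_finrank_orthogonal' (B := toBilin' J)
    (span ℝ (Set.range c))
  rw [h, finrank_bot, Module.finrank_fintype_fun_eq_card] at hdim
  have := finrank_range_le_card (R := ℝ) c
  simp only [Set.finrank] at this
  omega

theorem inv_mulVec_mulVec_mem_orthogonal (hAsymm : Aᵀ = A) (hJ : Jᵀ = -J)
    {S : Submodule ℝ (ι → ℝ)} (hS : ∀ x ∈ S, A⁻¹ *ᵥ (J *ᵥ x) ∈ S) {x : ι → ℝ}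
    (hx : x ∈ (toBilin' J).orthogonal S) : A⁻¹ *ᵥ (J *ᵥ x) ∈ (toBilin' J).orthogonal S := by
  have hAi : (A⁻¹)ᵀ = A⁻¹ := by rw [transpose_nonsing_inv, hAsymm]
  -- `cᵀ J (A⁻¹ J x) = xᵀ J (A⁻¹ J c)` because `J A⁻¹ J` is symmetric
  intro c hc
  have := hx _ (hS c hc)
  rw [toBilin'_apply'] at this ⊢
  rw [dotProduct_mulVec_of_skew hJ c, mulVec_dotProduct_of_symm hAi, dotProduct_comm, this,
    neg_zero]

theorem inv_mulVec_mulVec_mem_span_symplEigenpairs (hA : IsUnit A) {u v : κ → ι → ℝ}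
    {d : κ → ℝ} (heig : ∀ j, IsSymplEigenpair A J (d j) (u j) (v j)) (hd : ∀ j, d j ≠ 0)
    {x : ι → ℝ} (hx : x ∈ span ℝ (Set.range (Sum.elim u v))) :
    A⁻¹ *ᵥ (J *ᵥ x) ∈ span ℝ (Set.range (Sum.elim u v)) := by
  induction hx using Submodule.span_induction with
  | mem x hx =>
    obtain ⟨j | j, rfl⟩ := hx
    · rw [Sum.elim_inl, (heig j).inv_mulVec_left hA (hd j)]
      exact smul_mem _ _ (subset_span ⟨Sum.inr j, rfl⟩)
    · rw [Sum.elim_inr, (heig j).inv_mulVec_right hA (hd j)]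
      exact smul_mem _ _ (subset_span ⟨Sum.inl j, rfl⟩)
  | zero => simp
  | add x y _ _ hx hy => simpa only [mulVec_add] using add_mem hx hy
  | smul r x _ hx => simpa only [mulVec_smul] using smul_mem _ r hx

theorem exists_symplEigenpair_mem_orthogonal [Fintype κ] [DecidableEq κ] (hA : A.PosDef)
    (hJ : Jᵀ = -J) (hJu : IsUnit J) {u v : κ → ι → ℝ} {d : κ → ℝ}
    (h : IsSymplOrthonormal J u v) (heig : ∀ j, IsSymplEigenpair A J (d j) (u j) (v j))
    (hκ : 2 * Fintype.card κ < Fintype.card ι) :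
    ∃ d₀ : ℝ, ∃ u₀ ∈ (toBilin' J).orthogonal (span ℝ (Set.range (Sum.elim u v))),
      ∃ v₀ ∈ (toBilin' J).orthogonal (span ℝ (Set.range (Sum.elim u v))),
        IsSymplEigenpair A J d₀ u₀ v₀ ∧ u₀ ⬝ᵥ (J *ᵥ v₀) = 1 := by
  have hd : ∀ j, d j ≠ 0 := fun j => ((heig j).pos hA ((h j j).2.2.trans (if_pos rfl))).ne'
  exact exists_symplEigenpair_mem hA hJ hJu
    (orthogonal_span_range_ne_bot J _ (by simpa [two_mul] using hκ))
    fun x => inv_mulVec_mulVec_mem_orthogonal (isHermitian_iff_isSymm.1 hA.isHermitian).eq hJ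
      fun _ => inv_mulVec_mulVec_mem_span_symplEigenpairs hA.isUnit heig hd

theorem IsSymplOrthonormal.snoc {k : ℕ} {u v : Fin k → ι → ℝ} {u₀ v₀ : ι → ℝ} (hJ : Jᵀ = -J)
    (h : IsSymplOrthonormal J u v)
    (hu₀ : u₀ ∈ (toBilin' J).orthogonal (span ℝ (Set.range (Sum.elim u v))))
    (hv₀ : v₀ ∈ (toBilin' J).orthogonal (span ℝ (Set.range (Sum.elim u v))))
    (hn : u₀ ⬝ᵥ (J *ᵥ v₀) = 1) :
    IsSymplOrthonormal J (Fin.snoc u u₀ : Fin (k + 1) → ι → ℝ) (Fin.snoc v v₀) := by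
  have hJ0 : ∀ x y, x ⬝ᵥ (J *ᵥ y) = 0 → y ⬝ᵥ (J *ᵥ x) = 0 := fun x y hxy => by
    rw [dotProduct_mulVec_of_skew hJ, hxy, neg_zero]
  have ho : ∀ c, ∀ w ∈ (toBilin' J).orthogonal (span ℝ (Set.range (Sum.elim u v))),
      Sum.elim u v c ⬝ᵥ (J *ᵥ w) = 0 := fun c w hw => by
    rw [← toBilin'_apply']
    exact hw _ (subset_span ⟨c, rfl⟩)
  have huu := fun j => ho (.inl j) u₀ hu₀
  have huv := fun j => ho (.inl j) v₀ hv₀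
  have hvu := fun j => ho (.inr j) u₀ hu₀
  have hvv := fun j => ho (.inr j) v₀ hv₀
  simp only [Sum.elim_inl, Sum.elim_inr] at huu huv hvu hvv
  intro j l
  induction j using Fin.lastCases <;> induction l using Fin.lastCases <;>
    simp [h _ _, huu, huv, hvv, hJ0 _ _ (huu _), hJ0 _ _ (hvu _), hJ0 _ _ (hvv _),
      dotProduct_mulVec_self_of_skew hJ, hn, Fin.castSucc_ne_last, (Fin.castSucc_ne_last _).symm]

theorem exists_symplOrthonormal_extension (hA : A.PosDef) (hJ : Jᵀ = -J) (hJu : IsUnit J)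
    {m k : ℕ} (hmk : m ≤ k) (hk : 2 * k ≤ Fintype.card ι) {u v : Fin m → ι → ℝ} {d : Fin m → ℝ}
    (h : IsSymplOrthonormal J u v) (heig : ∀ j, IsSymplEigenpair A J (d j) (u j) (v j)) :
    ∃ (u' v' : Fin k → ι → ℝ) (d' : Fin k → ℝ), IsSymplOrthonormal J u' v' ∧
      (∀ j, IsSymplEigenpair A J (d' j) (u' j) (v' j)) ∧
      ∀ j : Fin m, u' (Fin.castLE hmk j) = u j ∧ v' (Fin.castLE hmk j) = v j := by
  induction k, hmk using Nat.le_induction with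
  | base => exact ⟨u, v, d, h, heig, fun j => by simp⟩
  | succ k hmk ih =>
    obtain ⟨u', v', d', h', heig', hext⟩ := ih (by omega)
    obtain ⟨d₀, u₀, hu₀, v₀, hv₀, heig₀, hn₀⟩ :=
      exists_symplEigenpair_mem_orthogonal hA hJ hJu h' heig' (by simp; omega)
    refine ⟨Fin.snoc u' u₀, Fin.snoc v' v₀, Fin.snoc d' d₀, h'.snoc hJ hu₀ hv₀ hn₀,
      Fin.lastCases (by simpa) (by simpa), fun j => ?_⟩
    rw [show Fin.castLE _ j = (Fin.castLE hmk j).castSucc from rfl, Fin.snoc_castSucc,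
      Fin.snoc_castSucc]
    exact hext j

end SkewForm

section Williamson

variable {n : ℕ}

theorem symplJ_transpose : (symplJ n)ᵀ = -symplJ n := by
  simp [symplJ, fromBlocks_transpose, fromBlocks_neg]

theorem symplJ_mul_self : symplJ n * symplJ n = -1 := by
  simp [symplJ, fromBlocks_multiply, ← fromBlocks_one, fromBlocks_neg]

theorem isUnit_symplJ : IsUnit (symplJ n) :=
  .of_mul_eq_one (-symplJ n) (by rw [mul_neg, symplJ_mul_self, neg_neg])

def IsWilliamsonNormalForm (A : Mat n) (e : Fin n → ℝ) : Prop :=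
  ∃ M : Mat n, Mᵀ * symplJ n * M = symplJ n ∧
    Mᵀ * A * M = fromBlocks (diagonal e) 0 0 (diagonal e)

theorem isWilliamsonNormalForm_of_symplOrthonormal {A : Mat n} {u v : Fin n → Fin n ⊕ Fin n → ℝ}
    {d : Fin n → ℝ} (h : IsSymplOrthonormal (symplJ n) u v)
    (heig : ∀ j, IsSymplEigenpair A (symplJ n) (d j) (u j) (v j)) :
    IsWilliamsonNormalForm A d := by
  refine ⟨(of (Sum.elim u v))ᵀ, ?_, ?_⟩ <;> ext (j | j) (k | k) <;>
    simp [of_mul_mul_transpose_apply, (heig _).1, (heig _).2, h _ _,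
      dotProduct_mulVec_of_skew symplJ_transpose (v _) (u _)] <;>
    simp [symplJ, one_apply, diagonal_apply, eq_comm] <;>
    split_ifs <;> simp_all

theorem IsSymplEigenpair.exists_eq_of_fromBlocks_diagonal {e : Fin n → ℝ} (he : ∀ i, 0 < e i)
    {d : ℝ} {a b : Fin n ⊕ Fin n → ℝ}
    (h : IsSymplEigenpair (fromBlocks (diagonal e) 0 0 (diagonal e)) (symplJ n) d a b)
    (hd : 0 < d) (ha : a ≠ 0) : ∃ i, e i = d := by
  set D : Mat n := fromBlocks (diagonal e) 0 0 (diagonal e)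
  have hDJ : D * symplJ n = symplJ n * D := by
    simp only [D, symplJ, fromBlocks_multiply]
    simp
  have hDDa : D *ᵥ (D *ᵥ a) = (d * d) • a := by
    rw [h.1, mulVec_smul, mulVec_mulVec, hDJ, ← mulVec_mulVec, h.2, mulVec_smul, mulVec_mulVec,
      symplJ_mul_self]
    simp [smul_smul, neg_mulVec]
  obtain ⟨k, hk⟩ := Function.ne_iff.1 ha
  have hek : Sum.elim e e k * Sum.elim e e k = d * d := by
    have := congrFun hDDa k
    simp only [D, fromBlocks_diagonal, mulVec_diagonal, Pi.smul_apply, smul_eq_mul] at this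
    exact mul_right_cancel₀ hk (by rw [← this, mul_assoc])
  have hpos : 0 < Sum.elim e e k := by cases k <;> exact he _
  have hek' : Sum.elim e e k = d := by nlinarith
  cases k <;> exact ⟨_, hek'⟩

theorem exists_eq_of_isWilliamsonNormalForm {A : Mat n} {e : Fin n → ℝ} (he : ∀ i, 0 < e i)
    (hW : IsWilliamsonNormalForm A e) {d : ℝ} {u v : Fin n ⊕ Fin n → ℝ}
    (h : IsSymplEigenpair A (symplJ n) d u v) (hd : 0 < d) (hu : u ≠ 0) : ∃ i, e i = d := by
  obtain ⟨M, hMJ, hMA⟩ := hW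
  have hM : M * -(symplJ n * Mᵀ * symplJ n) = 1 := by
    refine mul_eq_one_comm.1 ?_
    rw [neg_mul, Matrix.mul_assoc, Matrix.mul_assoc, ← Matrix.mul_assoc Mᵀ, hMJ,
      symplJ_mul_self, neg_neg]
  set N := -(symplJ n * Mᵀ * symplJ n)
  have hMN : ∀ x, M *ᵥ (N *ᵥ x) = x := fun x => by rw [mulVec_mulVec, hM, one_mulVec]
  rw [← hMN u, ← hMN v] at h
  refine (hMA ▸ h.transpose_mul_mul hMJ).exists_eq_of_fromBlocks_diagonal he hd ?_
  rintro h0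
  exact hu (by rw [← hMN u, h0, mulVec_zero])

theorem exists_williamson_of_symplOrthonormal {A : Mat n} (hA : A.PosDef)
    {u v : Fin n → Fin n ⊕ Fin n → ℝ} {d : Fin n → ℝ} (h : IsSymplOrthonormal (symplJ n) u v)
    (heig : ∀ j, IsSymplEigenpair A (symplJ n) (d j) (u j) (v j)) :
    ∃ e : Fin n → ℝ, Monotone e ∧ (∀ i, 0 < e i) ∧ IsWilliamsonNormalForm A e :=
  ⟨d ∘ Tuple.sort d, Tuple.monotone_sort d,
    fun _ => (heig _).pos hA ((h _ _).2.2.trans (if_pos rfl)),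
    isWilliamsonNormalForm_of_symplOrthonormal (h.comp_equiv (Tuple.sort d)) fun _ => heig _⟩

theorem exists_symplEig_eq {A : Mat n}
    (hW : ∃ e : Fin n → ℝ, Monotone e ∧ (∀ i, 0 < e i) ∧ IsWilliamsonNormalForm A e) {d : ℝ}
    {u v : Fin n ⊕ Fin n → ℝ} (h : IsSymplEigenpair A (symplJ n) d u v) (hd : 0 < d)
    (hu : u ≠ 0) : ∃ i, symplEig A i = d := by
  have hsymplEig : symplEig A = hW.choose := dif_pos hW
  obtain ⟨-, he, hAe⟩ := hW.choose_spec
  rw [hsymplEig]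
  exact exists_eq_of_isWilliamsonNormalForm he hAe h hd hu

end Williamson

theorem stmt10 {n m : ℕ} (hmn : m ≤ n) (A : Mat n) (hA : A.PosDef)
    (u v : Fin m → (Fin n ⊕ Fin n → ℝ))
    (horth : ∀ j k : Fin m,
      (u j) ⬝ᵥ (symplJ n *ᵥ u k) = 0 ∧ (v j) ⬝ᵥ (symplJ n *ᵥ v k) = 0)
    (hnorm : ∀ j k : Fin m, (u j) ⬝ᵥ (symplJ n *ᵥ v k) = if j = k then 1 else 0)
    (hpair : ∀ j : Fin m, EigPair A (u j) (v j)) :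
    ∃ u' v' : Fin n → (Fin n ⊕ Fin n → ℝ),
      (∀ j : Fin m, u' (Fin.castLE hmn j) = u j ∧ v' (Fin.castLE hmn j) = v j) ∧
      (∀ j k : Fin n,
        (u' j) ⬝ᵥ (symplJ n *ᵥ u' k) = 0 ∧ (v' j) ⬝ᵥ (symplJ n *ᵥ v' k) = 0) ∧
      (∀ j k : Fin n, (u' j) ⬝ᵥ (symplJ n *ᵥ v' k) = if j = k then 1 else 0) ∧
      (∀ j : Fin n, EigPair A (u' j) (v' j)) := by
  choose d hd using fun j => (hpair j).2
  obtain ⟨u', v', d', horth', heig', hext⟩ :=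
    exists_symplOrthonormal_extension hA symplJ_transpose isUnit_symplJ hmn (by simp [two_mul])
      (fun j k => ⟨(horth j k).1, (horth j k).2, hnorm j k⟩) fun j => (hd j).2
  have hW := exists_williamson_of_symplOrthonormal hA horth' heig'
  refine ⟨u', v', hext, fun j k => ⟨(horth' j k).1, (horth' j k).2.1⟩,
    fun j k => (horth' j k).2.2, fun j => ?_⟩
  have hn : u' j ⬝ᵥ (symplJ n *ᵥ v' j) = 1 := (horth' j j).2.2.trans (if_pos rfl)
  have hu : u' j ≠ 0 := by
    rintro h
    simp [h] at hn
  exact ⟨.inl hu, d' j, exists_symplEig_eq hW (heig' j) ((heig' j).pos hA hn) hu, heig' j⟩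
end

section
/- Define Φ(A) = i·A^{1/2}·J·A^{1/2} for 2×2 real positive definite matrices A (here n = 1 and J = [[0,1],[−1,0]]), so Φ takes values in the 2×2 complex Hermitian matrices. Then Φ is neither midpoint-convex nor midpoint-concave with respect to the Loewner order: for A = diag(1,4) and I the 2×2 identity, Φ((I+A)/2) − (1/2)(Φ(I) + Φ(A)) = (i/2)·[[0, √10 − 3],[−(√10 − 3), 0]], which is neither positive semidefinite nor negative semidefinite. -/
open Matrix
open scoped ComplexOrder

/-- The square root of a positive semidefinite matrix, as `Matrix.PosSemidef.sqrt` was defined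
in Mathlib of December 2024 (since removed). -/
noncomputable def Matrix.PosSemidef.sqrt {n 𝕜 : Type*} [Fintype n] [RCLike 𝕜] [DecidableEq n]
    {A : Matrix n n 𝕜} (hA : A.PosSemidef) : Matrix n n 𝕜 :=
  hA.1.eigenvectorUnitary.1 * diagonal ((↑) ∘ (√·) ∘ hA.1.eigenvalues) *
    (star hA.1.eigenvectorUnitary : Matrix n n 𝕜)

/-- `Φ(X) = i · X^{1/2} J X^{1/2}` for `2 × 2` positive semidefinite real `X`,
with `J = [[0,1],[-1,0]]`, viewed as a complex (Hermitian) matrix. -/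
noncomputable def Phi19 (X : Matrix (Fin 2) (Fin 2) ℝ) (hX : X.PosSemidef) :
    Matrix (Fin 2) (Fin 2) ℂ :=
  Complex.I • ((Matrix.PosSemidef.sqrt hX * !![0, 1; -1, 0] * Matrix.PosSemidef.sqrt hX).map (Complex.ofReal))

/-!
For a diagonal `X = diag(a, b)` we have `X^{1/2} J X^{1/2} = √(ab) J`, so `Φ(X) = i √(ab) J`.
Hence the midpoint defect at `I` and `diag(1, 4)` is `i c J` with `c = √(5/2) - 3/2 = (√10 - 3)/2 ≠ 0`.
The Hermitian matrix `i c J` has eigenvalues `±c`: the vectors `(1, i)` and `(1, -i)` give quadratic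
forms `-2c` and `2c`, so neither it nor its negative is positive semidefinite.
-/

section
open scoped MatrixOrder

lemma Matrix.PosSemidef.sqrt_eq_of_sq_eq {n 𝕜 : Type*} [Fintype n] [RCLike 𝕜] [DecidableEq n]
    {A B : Matrix n n 𝕜} (hA : A.PosSemidef) (hB : B.PosSemidef) (h : B ^ 2 = A) :
    hA.sqrt = B := by
  have h_cfc : hA.sqrt = cfc Real.sqrt A := by
    rw [hA.1.cfc_eq]
    simp [Matrix.PosSemidef.sqrt, IsHermitian.cfc, Unitary.conjStarAlgAut_apply]
  have h_unique : CFC.sqrt A = B := CFC.sqrt_unique (by rw [← h, pow_two]) hB.nonneg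
  rw [h_cfc, ← h_unique, CFC.sqrt_eq_real_sqrt A hA.nonneg, cfcₙ_eq_cfc]

end

lemma Matrix.PosSemidef.sqrt_diagonal {n : Type*} [Fintype n] [DecidableEq n] {d : n → ℝ}
    (hd : (diagonal d).PosSemidef) : hd.sqrt = diagonal fun i => √(d i) := by
  have hd_nonneg : ∀ i, 0 ≤ d i := posSemidef_diagonal_iff.mp hd
  refine hd.sqrt_eq_of_sq_eq (posSemidef_diagonal_iff.mpr fun i => Real.sqrt_nonneg _) ?_
  rw [diagonal_pow]
  congr 1
  funext i
  exact Real.sq_sqrt (hd_nonneg i)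

lemma Phi19_of_eq_diag {X : Matrix (Fin 2) (Fin 2) ℝ} (hX : X.PosSemidef) {a b : ℝ}
    (hXab : X = !![a, 0; 0, b]) :
    Phi19 X hX = (Complex.I * (√a * √b : ℝ)) • !![(0 : ℂ), 1; -1, 0] := by
  obtain rfl : X = diagonal ![a, b] := by
    rw [hXab]; ext i j; fin_cases i <;> fin_cases j <;> rfl
  rw [Phi19, hX.sqrt_diagonal]
  ext i j
  fin_cases i <;> fin_cases j <;> simp [Matrix.mul_apply, Fin.sum_univ_two, mul_comm]

lemma not_posSemidef_I_mul_smul_J {c : ℝ} (hc : c ≠ 0) :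
    ¬ ((Complex.I * c) • !![(0 : ℂ), 1; -1, 0]).PosSemidef := by
  intro h
  have h₁ := h.dotProduct_mulVec_nonneg ![1, Complex.I]
  have h₂ := h.dotProduct_mulVec_nonneg ![1, -Complex.I]
  simp [Matrix.mulVec, dotProduct, Fin.sum_univ_two, Complex.le_def] at h₁ h₂
  exact hc (by linarith)

theorem stmt19
    (hA : (!![1, 0; 0, 4] : Matrix (Fin 2) (Fin 2) ℝ).PosSemidef)
    (hI : (1 : Matrix (Fin 2) (Fin 2) ℝ).PosSemidef)
    (hMid : (((1 : ℝ) / 2) • (1 + !![1, 0; 0, 4]) : Matrix (Fin 2) (Fin 2) ℝ).PosSemidef) :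
    Phi19 _ hMid - (1 / 2 : ℂ) • (Phi19 _ hI + Phi19 _ hA) =
      (Complex.I / 2) •
        !![(0 : ℂ), ((Real.sqrt 10 - 3 : ℝ) : ℂ); -((Real.sqrt 10 - 3 : ℝ) : ℂ), 0] ∧
    ¬ (Phi19 _ hMid - (1 / 2 : ℂ) • (Phi19 _ hI + Phi19 _ hA)).PosSemidef ∧
    ¬ (-(Phi19 _ hMid - (1 / 2 : ℂ) • (Phi19 _ hI + Phi19 _ hA))).PosSemidef := by
  set c : ℝ := (√10 - 3) / 2
  have h_diff : Phi19 _ hMid - (1 / 2 : ℂ) • (Phi19 _ hI + Phi19 _ hA) =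
      (Complex.I * c) • !![(0 : ℂ), 1; -1, 0] := by
    have h_sqrt : √(5 / 2 : ℝ) = √10 / 2 := by
      rw [show (5 / 2 : ℝ) = 10 / 2 ^ 2 by norm_num, Real.sqrt_div' _ (by norm_num),
        Real.sqrt_sq (by norm_num)]
    have h_sqrt4 : √(4 : ℝ) = 2 := by
      rw [show (4 : ℝ) = 2 ^ 2 by norm_num, Real.sqrt_sq (by norm_num)]
    rw [Phi19_of_eq_diag hMid (a := 1) (b := 5 / 2)
        (by ext i j; fin_cases i <;> fin_cases j <;> norm_num),
      Phi19_of_eq_diag hI (a := 1) (b := 1)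
        (by ext i j; fin_cases i <;> fin_cases j <;> rfl),
      Phi19_of_eq_diag hA rfl, h_sqrt, h_sqrt4]
    ext i j
    fin_cases i <;> fin_cases j <;> simp [c] <;> ring
  have hc : c ≠ 0 := by
    have h_three : (3 : ℝ) < √10 := by
      rw [show (3 : ℝ) = √(3 ^ 2) by rw [Real.sqrt_sq (by norm_num)]]
      exact Real.sqrt_lt_sqrt (by norm_num) (by norm_num)
    exact (show 0 < c by simp only [c]; linarith).ne'
  refine ⟨?_, ?_, ?_⟩
  · rw [h_diff]
    ext i j
    fin_cases i <;> fin_cases j <;> simp [c] <;> ring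
  · rw [h_diff]
    exact not_posSemidef_I_mul_smul_J hc
  · rw [h_diff, ← neg_smul, ← mul_neg, ← Complex.ofReal_neg]
    exact not_posSemidef_I_mul_smul_J (neg_ne_zero.mpr hc)
end
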